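/- arXiv:2107.02324 — 3 statements merged into one kernel-verified Lean document; each statement's English description precedes it below -/
import Mathlib

section
/- (Proposition 1, second part) Let $s_d$ be an eigenvector with eigenvalue $\lambda_d \neq 0$ of $S_{W,\delta}^{-1/2} S_B S_{W,\delta}^{-1/2}$, and set $y_{id} = \xi_{jd}$ whenever observation $i$ belongs to class $j$, with $\xi_{jd} = \frac{1}{\lambda_d}(\bar{x}_j-\bar{x})^T S_{W,\delta}^{-1/2}s_d$. Then $\sum_{i=1}^n y_{id} x_i = \sum_{j=1}^J n_j \xi_{jd} \bar{x}_j = n\, S_{W,\delta}^{1/2} s_d$. -/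
open Finset Matrix

lemma aux_sum_dotProduct {ι p : Type*} [Fintype p] (s : Finset ι) (f : ι → p → ℝ)
    (w : p → ℝ) : (∑ j ∈ s, f j) ⬝ᵥ w = ∑ j ∈ s, f j ⬝ᵥ w := by
  simp only [dotProduct, Finset.sum_apply, Finset.sum_mul]
  exact Finset.sum_comm

lemma aux_sum_mulVec {ι p : Type*} [Fintype p] [DecidableEq p] (s : Finset ι)
    (M : ι → Matrix p p ℝ) (v : p → ℝ) :
    (∑ j ∈ s, M j).mulVec v = ∑ j ∈ s, (M j).mulVec v := by
  ext k
  simp only [Matrix.mulVec, dotProduct, Finset.sum_apply, Finset.sum_mul,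
    Matrix.sum_apply]
  exact Finset.sum_comm

lemma aux_vecMulVec_mulVec {p : Type*} [Fintype p] (a b v : p → ℝ) :
    (vecMulVec a b).mulVec v = (b ⬝ᵥ v) • a := by
  ext k
  simp only [Matrix.mulVec, Matrix.vecMulVec_apply, dotProduct, Pi.smul_apply,
    smul_eq_mul, Finset.sum_mul]
  exact Finset.sum_congr rfl fun l _ => by ring

/-- Proposition 1, second part:
`∑_i y_{id} x_i = ∑_j n_j ξ_{jd} x̄_j = n S_{W,δ}^{1/2} s_d`. -/
theorem response_regression_identity (p J n : ℕ) (hn : 0 < n)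
    (x : Fin n → Fin p → ℝ) (c : Fin n → Fin J)
    (hcls : ∀ j, ∃ i, c i = j)
    (nj : Fin J → ℕ) (hnj : ∀ j, nj j = (Finset.univ.filter (fun i => c i = j)).card)
    (xbarj : Fin J → Fin p → ℝ)
    (hxbarj : ∀ j, xbarj j = (1 / (nj j : ℝ)) • ∑ i ∈ Finset.univ.filter (fun i => c i = j), x i)
    (xb : Fin p → ℝ) (hxb : xb = (1 / (n : ℝ)) • ∑ i, x i)
    (SB SW : Matrix (Fin p) (Fin p) ℝ)
    (hSB : SB = (1 / (n : ℝ)) • ∑ j, (nj j : ℝ) • vecMulVec (xbarj j - xb) (xbarj j - xb))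
    (hSW : SW = (1 / (n : ℝ)) • ∑ i, vecMulVec (x i - xbarj (c i)) (x i - xbarj (c i)))
    (δ : ℝ) (Sδ : Matrix (Fin p) (Fin p) ℝ)
    (hSδ : Sδ = SW + (δ / (n : ℝ)) • (1 : Matrix (Fin p) (Fin p) ℝ))
    (hpos : Sδ.PosDef)
    (Wh : Matrix (Fin p) (Fin p) ℝ) (hWhSymm : Wh.IsSymm) (hWh : Wh * Wh = Sδ)
    (s : Fin p → ℝ) (lam : ℝ) (hlam : lam ≠ 0)
    (heig : (Wh⁻¹ * SB * Wh⁻¹).mulVec s = lam • s)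
    (xi : Fin J → ℝ)
    (hxi : ∀ j, xi j = (1 / lam) * ((xbarj j - xb) ⬝ᵥ (Wh⁻¹).mulVec s))
    (y : Fin n → ℝ) (hy : ∀ i, y i = xi (c i)) :
    (∑ i, y i • x i) = (∑ j, ((nj j : ℝ) * xi j) • xbarj j) ∧
      (∑ j, ((nj j : ℝ) * xi j) • xbarj j) = (n : ℝ) • Wh.mulVec s := by
  have hnn : (n : ℝ) ≠ 0 := Nat.cast_ne_zero.mpr hn.ne'
  have hnj0 : ∀ j, (nj j : ℝ) ≠ 0 := by
    intro j
    obtain ⟨i, hi⟩ := hcls j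
    have hpos' : 0 < nj j := by
      rw [hnj j]
      exact Finset.card_pos.mpr ⟨i, by simp [hi]⟩
    exact_mod_cast hpos'.ne'
  have hset : ∀ j, (nj j : ℝ) • xbarj j = ∑ i ∈ Finset.univ.filter (fun i => c i = j), x i := by
    intro j
    rw [hxbarj j, smul_smul, mul_one_div, div_self (hnj0 j), one_smul]
  -- first equality
  have h1 : (∑ i, y i • x i) = ∑ j, ((nj j : ℝ) * xi j) • xbarj j := by
    rw [← Finset.sum_fiberwise Finset.univ c (fun i => y i • x i)]
    refine Finset.sum_congr rfl fun j _ => ?_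
    have hterm : ∀ i ∈ Finset.univ.filter (fun i => c i = j), y i • x i = xi j • x i := by
      intro i hi
      simp only [Finset.mem_filter] at hi
      rw [hy i, hi.2]
    rw [Finset.sum_congr rfl hterm, ← Finset.smul_sum, ← hset j, smul_smul, mul_comm]
  refine ⟨h1, ?_⟩
  set w := (Wh⁻¹).mulVec s with hw
  -- Wh is invertible
  have hdetSδ : IsUnit Sδ.det := isUnit_iff_ne_zero.mpr hpos.det_pos.ne'
  have hdet : IsUnit Wh.det := by
    rw [← hWh, Matrix.det_mul] at hdetSδ
    exact isUnit_of_mul_isUnit_left hdetSδ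
  -- Step A : SB *ᵥ w = lam • Wh *ᵥ s
  have hA : SB.mulVec w = lam • Wh.mulVec s := by
    have h2 : (Wh⁻¹).mulVec (SB.mulVec w) = lam • s := by
      rw [hw, Matrix.mulVec_mulVec, Matrix.mulVec_mulVec]
      exact heig
    have h3 := congrArg Wh.mulVec h2
    rwa [Matrix.mulVec_mulVec, Matrix.mul_nonsing_inv Wh hdet, Matrix.one_mulVec,
      Matrix.mulVec_smul] at h3
  -- ∑ nj • (x̄_j - x̄) = 0
  have hsum : ∑ j, (nj j : ℝ) • xbarj j = ∑ i, x i := by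
    rw [Finset.sum_congr rfl (fun j _ => hset j)]
    exact Finset.sum_fiberwise Finset.univ c x
  have hcard : ∑ j, (nj j : ℝ) = (n : ℝ) := by
    have h := Finset.sum_fiberwise Finset.univ c (fun _ => (1 : ℝ))
    simpa [hnj] using h
  have hzero : ∑ j, (nj j : ℝ) • (xbarj j - xb) = 0 := by
    have : ∑ j, (nj j : ℝ) • (xbarj j - xb)
        = (∑ j, (nj j : ℝ) • xbarj j) - (∑ j, (nj j : ℝ)) • xb := by
      rw [Finset.sum_smul]
      rw [← Finset.sum_sub_distrib]
      exact Finset.sum_congr rfl fun j _ => smul_sub _ _ _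
    rw [this, hsum, hcard, hxb, smul_smul, mul_one_div, div_self hnn, one_smul, sub_self]
  -- ∑ nj * xi j = 0
  have hxisum : ∑ j, (nj j : ℝ) * xi j = 0 := by
    have hd : (∑ j, (nj j : ℝ) • (xbarj j - xb)) ⬝ᵥ w = 0 := by
      rw [hzero, zero_dotProduct]
    rw [aux_sum_dotProduct] at hd
    calc ∑ j, (nj j : ℝ) * xi j
        = (1 / lam) * ∑ j, ((nj j : ℝ) • (xbarj j - xb)) ⬝ᵥ w := by
          rw [Finset.mul_sum]
          exact Finset.sum_congr rfl fun j _ => by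
            simp only [hxi j, smul_dotProduct, smul_eq_mul]; ring
      _ = 0 := by rw [hd, mul_zero]
  -- main computation
  have hSBw : SB.mulVec w
      = (1 / (n : ℝ)) • ∑ j, (nj j : ℝ) • (((xbarj j - xb) ⬝ᵥ w) • (xbarj j - xb)) := by
    rw [hSB, Matrix.smul_mulVec, aux_sum_mulVec]
    congr 1
    exact Finset.sum_congr rfl fun j _ => by
      rw [Matrix.smul_mulVec, aux_vecMulVec_mulVec]
  calc ∑ j, ((nj j : ℝ) * xi j) • xbarj j
      = ∑ j, ((nj j : ℝ) * xi j) • (xbarj j - xb) := by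
        have : ∑ j, ((nj j : ℝ) * xi j) • (xbarj j - xb)
            = (∑ j, ((nj j : ℝ) * xi j) • xbarj j) - (∑ j, (nj j : ℝ) * xi j) • xb := by
          rw [Finset.sum_smul, ← Finset.sum_sub_distrib]
          exact Finset.sum_congr rfl fun j _ => smul_sub _ _ _
        rw [this, hxisum, zero_smul, sub_zero]
    _ = (1 / lam) • ∑ j, (nj j : ℝ) • (((xbarj j - xb) ⬝ᵥ w) • (xbarj j - xb)) := by
        rw [Finset.smul_sum]
        exact Finset.sum_congr rfl fun j _ => by
          rw [hxi j, smul_smul, smul_smul]; congr 1; ring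
    _ = (1 / lam) • ((n : ℝ) • SB.mulVec w) := by
        rw [hSBw, smul_smul, smul_smul, mul_assoc, mul_one_div, div_self hnn, mul_one]
    _ = (n : ℝ) • Wh.mulVec s := by
        rw [hA, smul_smul, smul_smul]
        congr 1
        field_simp
end

section
/- (Theorem 1) The solution $(\beta_{0d}, \beta_d)$ of the ridge normal equations $n\beta_{0d} + \sum_j n_j \bar{x}_j^T \beta_d = 0$ and $\sum_j n_j \bar{x}_j \beta_{0d} + (\sum_j X_j^T X_j + \delta I)\beta_d = n S_{W,\delta}^{1/2} s_d$ satisfies $\beta_d = \frac{1}{1+\lambda_d} S_{W,\delta}^{-1/2} s_d$, where $(\lambda_d, s_d)$ is an eigenpair of $S_{W,\delta}^{-1/2} S_B S_{W,\delta}^{-1/2}$. That is, the ridge-regression coefficient vector is parallel to the LDA transformation vector $S_{W,\delta}^{-1/2}s_d$. -/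
/-!
Centring each observation about its class mean and each class mean about the grand mean splits
the total scatter as `∑ᵢ xᵢ xᵢᵀ = n S_W + n S_B + n x̄ x̄ᵀ`. The first normal equation gives
`β₀ = -x̄ᵀβ`, which cancels the `n x̄ x̄ᵀ` term in the second, leaving
`(S_{W,δ} + S_B) β = S_{W,δ}^{1/2} s`. The eigen-equation says
`(S_{W,δ} + S_B) S_{W,δ}^{-1/2} s = (1 + λ) S_{W,δ}^{1/2} s`, and `S_{W,δ} + S_B` is positive
definite, hence injective.
-/

open Finset Matrix

section Scatter

variable {R ι κ m : Type*}

lemma card_smul_one_div_smul_sum {𝕜 E : Type*} [DivisionRing 𝕜] [CharZero 𝕜] [AddCommGroup E]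
    [Module 𝕜 E] (s : Finset ι) (f : ι → E) :
    (#s : 𝕜) • ((1 / (#s : 𝕜)) • ∑ i ∈ s, f i) = ∑ i ∈ s, f i := by
  rcases s.eq_empty_or_nonempty with rfl | hs
  · simp
  · rw [one_div, smul_inv_smul₀ (by exact_mod_cast hs.card_pos.ne')]

variable [CommRing R]

lemma sum_smul_vecMulVec_sub_mean (s : Finset ι) (w : ι → R) (y : ι → m → R) (a : m → R)
    (ha : ∑ i ∈ s, w i • y i = (∑ i ∈ s, w i) • a) :
    ∑ i ∈ s, w i • vecMulVec (y i - a) (y i - a)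
      = ∑ i ∈ s, w i • vecMulVec (y i) (y i) - (∑ i ∈ s, w i) • vecMulVec a a := by
  ext k l
  have hk := congrFun ha k
  have hl := congrFun ha l
  simp only [Finset.sum_apply, Pi.smul_apply, smul_eq_mul] at hk hl
  have expand : ∀ i, w i * ((y i k - a k) * (y i l - a l))
      = w i * (y i k * y i l) - a l * (w i * y i k) - a k * (w i * y i l) + a k * a l * w i :=
    fun i => by ring
  simp only [Matrix.sum_apply, Matrix.sub_apply, Matrix.smul_apply, vecMulVec_apply,
    Pi.sub_apply, smul_eq_mul, expand, sum_add_distrib, sum_sub_distrib, ← mul_sum, hk, hl]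
  ring

variable [Fintype ι] [Fintype κ] [DecidableEq κ]

lemma sum_card_smul_classMean (x : ι → m → R) (c : ι → κ) (xbar : κ → m → R)
    (hxbar : ∀ j, (#{i | c i = j} : R) • xbar j = ∑ i with c i = j, x i) :
    ∑ j, (#{i | c i = j} : R) • xbar j = ∑ i, x i := by
  simp_rw [hxbar]
  exact sum_fiberwise _ _ _

lemma sum_vecMulVec_sub_classMean (x : ι → m → R) (c : ι → κ) (xbar : κ → m → R)
    (hxbar : ∀ j, (#{i | c i = j} : R) • xbar j = ∑ i with c i = j, x i) :
    ∑ i, vecMulVec (x i - xbar (c i)) (x i - xbar (c i))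
      = ∑ i, vecMulVec (x i) (x i) - ∑ j, (#{i | c i = j} : R) • vecMulVec (xbar j) (xbar j) := by
  rw [← sum_fiberwise univ c, ← sum_fiberwise univ c (fun i => vecMulVec (x i) (x i)),
    ← sum_sub_distrib]
  refine sum_congr rfl fun j _ => ?_
  have hmean : ∑ i with c i = j, (1 : R) • x i = (∑ i with c i = j, (1 : R)) • xbar j := by
    simpa using (hxbar j).symm
  have hclass := sum_smul_vecMulVec_sub_mean _ (fun _ => 1) x (xbar j) hmean
  simp only [one_smul, sum_const, nsmul_one] at hclass
  rw [← hclass]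
  exact sum_congr rfl fun i hi => by rw [(mem_filter.mp hi).2]

lemma sum_vecMulVec_self_eq_scatter (x : ι → m → R) (c : ι → κ) (xbar : κ → m → R)
    (xb : m → R) (hxbar : ∀ j, (#{i | c i = j} : R) • xbar j = ∑ i with c i = j, x i)
    (hxb : (Fintype.card ι : R) • xb = ∑ i, x i) :
    ∑ i, vecMulVec (x i) (x i)
      = ∑ i, vecMulVec (x i - xbar (c i)) (x i - xbar (c i))
        + ∑ j, (#{i | c i = j} : R) • vecMulVec (xbar j - xb) (xbar j - xb)
        + (Fintype.card ι : R) • vecMulVec xb xb := by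
  have hcard : ∑ j, (#{i | c i = j} : R) = Fintype.card ι := by
    rw [← Nat.cast_sum, ← card_eq_sum_card_fiberwise (fun _ _ => mem_univ _), card_univ]
  have between := sum_smul_vecMulVec_sub_mean univ (fun j => (#{i | c i = j} : R)) xbar xb
    (by rw [sum_card_smul_classMean x c xbar hxbar, hcard, hxb])
  rw [sum_vecMulVec_sub_classMean x c xbar hxbar, between, hcard]
  abel

end Scatter

section LinearAlgebra

variable {m : Type*} [Fintype m]

lemma posSemidef_sum_smul_vecMulVec_self {ι : Type*} (s : Finset ι) (w : ι → ℝ)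
    (hw : ∀ j ∈ s, 0 ≤ w j) (v : ι → m → ℝ) :
    (∑ j ∈ s, w j • vecMulVec (v j) (v j)).PosSemidef :=
  posSemidef_sum s fun j hj => by
    simpa using (posSemidef_vecMulVec_self_star (v j)).smul (hw j hj)

lemma mulVec_eq_of_ridge_normal_eqns {A : Matrix m m ℝ} {xb β v : m → ℝ} {β0 n : ℝ}
    (hn : n ≠ 0) (h1 : n * β0 + n * (xb ⬝ᵥ β) = 0)
    (h2 : β0 • (n • xb) + (n • (A + vecMulVec xb xb)) *ᵥ β = n • v) :
    A *ᵥ β = v := by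
  have hβ0 : β0 = -(xb ⬝ᵥ β) := by
    apply mul_left_cancel₀ hn
    linarith
  rw [hβ0, smul_mulVec, add_mulVec, vecMulVec_mulVec, op_smul_eq_smul, smul_comm,
    neg_smul] at h2
  exact smul_right_injective _ hn (show n • (A *ᵥ β) = n • v by rw [← h2]; module)

variable [DecidableEq m]

lemma add_mulVec_inv_mulVec_of_eigen {W S B : Matrix m m ℝ} {s : m → ℝ} {lam : ℝ}
    (hW : IsUnit W) (hWW : W * W = S) (heig : (W⁻¹ * B * W⁻¹) *ᵥ s = lam • s) :
    (S + B) *ᵥ (W⁻¹ *ᵥ s) = (1 + lam) • W *ᵥ s := by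
  have hWinv : W * W⁻¹ = 1 := mul_nonsing_inv W ((isUnit_iff_isUnit_det W).mp hW)
  have hB : B *ᵥ (W⁻¹ *ᵥ s) = lam • W *ᵥ s := by
    rw [← mulVec_smul, ← heig, mulVec_mulVec, mulVec_mulVec, ← Matrix.mul_assoc,
      ← Matrix.mul_assoc, hWinv, Matrix.one_mul]
  rw [add_mulVec, hB, mulVec_mulVec, ← hWW, Matrix.mul_assoc, hWinv, Matrix.mul_one, add_smul,
    one_smul]

lemma eq_inv_smul_of_mulVec_eq {A W : Matrix m m ℝ} {β s : m → ℝ} {t : ℝ}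
    (hA : IsUnit A) (hW : IsUnit W) (hβ : A *ᵥ β = W *ᵥ s)
    (hu : A *ᵥ (W⁻¹ *ᵥ s) = t • W *ᵥ s) :
    β = t⁻¹ • W⁻¹ *ᵥ s := by
  have hAinj := mulVec_injective_of_isUnit hA
  by_cases ht : t = 0
  · have hs : s = 0 := by
      have hWinv_s : W⁻¹ *ᵥ s = 0 := hAinj (by rw [hu, ht, zero_smul, mulVec_zero])
      rw [← one_mulVec s, ← mul_nonsing_inv W ((isUnit_iff_isUnit_det W).mp hW),
        ← mulVec_mulVec, hWinv_s, mulVec_zero]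
    rw [ht, _root_.inv_zero, zero_smul]
    exact hAinj (by rw [hβ, hs, mulVec_zero, mulVec_zero])
  · exact hAinj (by rw [hβ, mulVec_smul, hu, smul_smul, inv_mul_cancel₀ ht, one_smul])

end LinearAlgebra

theorem ridge_solution_parallel_to_LDA_general (p J n : ℕ) (hn : 0 < n)
    (x : Fin n → Fin p → ℝ) (c : Fin n → Fin J)
    (nj : Fin J → ℕ) (hnj : ∀ j, nj j = (Finset.univ.filter (fun i => c i = j)).card)
    (xbarj : Fin J → Fin p → ℝ)
    (hxbarj : ∀ j, xbarj j = (1 / (nj j : ℝ)) • ∑ i ∈ Finset.univ.filter (fun i => c i = j), x i)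
    (xb : Fin p → ℝ) (hxb : xb = (1 / (n : ℝ)) • ∑ i, x i)
    (SB SW : Matrix (Fin p) (Fin p) ℝ)
    (hSB : SB = (1 / (n : ℝ)) • ∑ j, (nj j : ℝ) • vecMulVec (xbarj j - xb) (xbarj j - xb))
    (hSW : SW = (1 / (n : ℝ)) • ∑ i, vecMulVec (x i - xbarj (c i)) (x i - xbarj (c i)))
    (δ : ℝ) (Sδ : Matrix (Fin p) (Fin p) ℝ)
    (hSδ : Sδ = SW + (δ / (n : ℝ)) • (1 : Matrix (Fin p) (Fin p) ℝ))
    (hpos : Sδ.PosDef)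
    (Wh : Matrix (Fin p) (Fin p) ℝ) (hWh : Wh * Wh = Sδ)
    (s : Fin p → ℝ) (lam : ℝ)
    (heig : (Wh⁻¹ * SB * Wh⁻¹).mulVec s = lam • s)
    (β0 : ℝ) (β : Fin p → ℝ)
    (hNE1 : (n : ℝ) * β0 + ∑ j, (nj j : ℝ) * (xbarj j ⬝ᵥ β) = 0)
    (hNE2 : β0 • (∑ j, (nj j : ℝ) • xbarj j)
        + ((∑ i, vecMulVec (x i) (x i)) + δ • (1 : Matrix (Fin p) (Fin p) ℝ)).mulVec β
        = (n : ℝ) • Wh.mulVec s) :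
    β = (1 / (1 + lam)) • (Wh⁻¹).mulVec s := by
  have hn0 : (n : ℝ) ≠ 0 := by positivity
  have hxbar : ∀ j, (#{i | c i = j} : ℝ) • xbarj j = ∑ i with c i = j, x i := fun j => by
    rw [hxbarj, hnj]
    exact card_smul_one_div_smul_sum _ _
  have hnxb : (n : ℝ) • xb = ∑ i, x i := by
    simpa [hxb] using card_smul_one_div_smul_sum (𝕜 := ℝ) univ x
  have hclass : ∑ j, (nj j : ℝ) • xbarj j = ∑ i, x i := by
    simpa only [hnj] using sum_card_smul_classMean x c xbarj hxbar
  have hscatter : ∑ i, vecMulVec (x i) (x i) + δ • (1 : Matrix (Fin p) (Fin p) ℝ)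
      = (n : ℝ) • (Sδ + SB + vecMulVec xb xb) := by
    rw [sum_vecMulVec_self_eq_scatter x c xbarj xb hxbar (by simpa using hnxb), hSδ, hSB, hSW]
    simp only [← hnj, Fintype.card_fin, smul_add, smul_smul, one_div, mul_inv_cancel₀ hn0,
      mul_div_cancel₀ _ hn0, one_smul]
    abel
  have hnormal : (Sδ + SB) *ᵥ β = Wh *ᵥ s := by
    refine mulVec_eq_of_ridge_normal_eqns hn0 ?_ (by rwa [hclass, ← hnxb, hscatter] at hNE2)
    simpa [← smul_eq_mul, ← sum_dotProduct, ← smul_dotProduct, hclass, ← hnxb] using hNE1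
  have hSBpsd : SB.PosSemidef := by
    rw [hSB]
    exact (posSemidef_sum_smul_vecMulVec_self _ _ (fun _ _ => by positivity) _).smul
      (by positivity)
  have hWunit : IsUnit Wh := isUnit_of_mul_isUnit_left (hWh ▸ hpos.isUnit)
  rw [one_div]
  exact eq_inv_smul_of_mulVec_eq (hpos.add_posSemidef hSBpsd).isUnit hWunit hnormal
    (add_mulVec_inv_mulVec_of_eigen hWunit hWh heig)

/-- Theorem 1: the solution of the ridge normal equations satisfies
`β_d = (1/(1+λ_d)) S_{W,δ}^{-1/2} s_d`. -/
theorem ridge_solution_parallel_to_LDA (p J n : ℕ) (hn : 0 < n)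
    (x : Fin n → Fin p → ℝ) (c : Fin n → Fin J)
    (hcls : ∀ j, ∃ i, c i = j)
    (nj : Fin J → ℕ) (hnj : ∀ j, nj j = (Finset.univ.filter (fun i => c i = j)).card)
    (xbarj : Fin J → Fin p → ℝ)
    (hxbarj : ∀ j, xbarj j = (1 / (nj j : ℝ)) • ∑ i ∈ Finset.univ.filter (fun i => c i = j), x i)
    (xb : Fin p → ℝ) (hxb : xb = (1 / (n : ℝ)) • ∑ i, x i)
    (SB SW : Matrix (Fin p) (Fin p) ℝ)
    (hSB : SB = (1 / (n : ℝ)) • ∑ j, (nj j : ℝ) • vecMulVec (xbarj j - xb) (xbarj j - xb))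
    (hSW : SW = (1 / (n : ℝ)) • ∑ i, vecMulVec (x i - xbarj (c i)) (x i - xbarj (c i)))
    (δ : ℝ) (hδ : 0 ≤ δ) (Sδ : Matrix (Fin p) (Fin p) ℝ)
    (hSδ : Sδ = SW + (δ / (n : ℝ)) • (1 : Matrix (Fin p) (Fin p) ℝ))
    (hpos : Sδ.PosDef)
    (Wh : Matrix (Fin p) (Fin p) ℝ) (hWhSymm : Wh.IsSymm) (hWh : Wh * Wh = Sδ)
    (s : Fin p → ℝ) (lam : ℝ) (hs : s ⬝ᵥ s = 1)
    (heig : (Wh⁻¹ * SB * Wh⁻¹).mulVec s = lam • s)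
    (β0 : ℝ) (β : Fin p → ℝ)
    (hNE1 : (n : ℝ) * β0 + ∑ j, (nj j : ℝ) * (xbarj j ⬝ᵥ β) = 0)
    (hNE2 : β0 • (∑ j, (nj j : ℝ) • xbarj j)
        + ((∑ i, vecMulVec (x i) (x i)) + δ • (1 : Matrix (Fin p) (Fin p) ℝ)).mulVec β
        = (n : ℝ) • Wh.mulVec s) :
    β = (1 / (1 + lam)) • (Wh⁻¹).mulVec s :=
  ridge_solution_parallel_to_LDA_general p J n hn x c nj hnj xbarj hxbarj xb hxb SB SW hSB hSW δ Sδ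
    hSδ hpos Wh hWh s lam heig β0 β hNE1 hNE2
end

section
/- (Eq. 20) With $a_i = \frac{\hat{y}_{id}-y_{id}}{1-h_{ii}}$ and $\hat{y}_{kd} = \sum_r h_{kr}y_{rd}$ where $h_{kr} = \tilde{x}_k^TC^{-1}\tilde{x}_r$, we have $\sum_{k\neq i}(\tilde{x}_k^T\hat\alpha_d^{*(-i)})^2 = \sum_{k\neq i}\hat{y}_{kd}^2 + 2a_i\sum_{k\neq i}\hat{y}_{kd}h_{ki} + a_i^2\sum_{k\neq i}h_{ki}^2$. -/
open Finset Matrix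

lemma vecMulVec_mulVec' {n : ℕ} (u v w : Fin n → ℝ) :
    (vecMulVec u v).mulVec w = (v ⬝ᵥ w) • u := by
  funext j
  simp [vecMulVec_apply, mulVec, dotProduct, Finset.mul_sum, mul_comm, mul_assoc, mul_left_comm]

/-- Eq. 20: expansion of `∑_{k≠i} (x̃_kᵀ α̂_d^{*(-i)})²`. -/
theorem loo_sum_of_squares (n q : ℕ)
    (Xt : Matrix (Fin n) (Fin q) ℝ) (Δ : Matrix (Fin q) (Fin q) ℝ) (hΔ : Δ.IsSymm)
    (C : Matrix (Fin q) (Fin q) ℝ) (hC : C = Xtᵀ * Xt + Δ)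
    (hCunit : IsUnit C.det)
    (i : Fin n)
    (hC' : IsUnit (C - vecMulVec (Xt i) (Xt i)).det)
    (y : Fin n → ℝ)
    (αloo : Fin q → ℝ)
    (hαloo : αloo = (C - vecMulVec (Xt i) (Xt i))⁻¹.mulVec (Xtᵀ.mulVec y - y i • Xt i))
    (h : Fin n → Fin n → ℝ) (hh : ∀ k r, h k r = Xt k ⬝ᵥ C⁻¹.mulVec (Xt r))
    (hne : h i i ≠ 1)
    (yhat : Fin n → ℝ) (hyhat : ∀ k, yhat k = ∑ r, h k r * y r)
    (a : ℝ) (ha : a = (yhat i - y i) / (1 - h i i)) :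
    ∑ k ∈ Finset.univ.erase i, (Xt k ⬝ᵥ αloo) ^ 2
      = (∑ k ∈ Finset.univ.erase i, yhat k ^ 2)
        + 2 * a * (∑ k ∈ Finset.univ.erase i, yhat k * h k i)
        + a ^ 2 * ∑ k ∈ Finset.univ.erase i, h k i ^ 2 := by
  set x := Xt i with hx
  set b := Xtᵀ.mulVec y with hb
  set M := C - vecMulVec x x with hM
  -- dot with the regression term gives yhat
  have hb' : b = ∑ r, y r • Xt r := by
    funext j
    simp [hb, mulVec, dotProduct, Finset.sum_apply, mul_comm]
  have hmvs : C⁻¹.mulVec b = ∑ r, y r • C⁻¹.mulVec (Xt r) := by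
    rw [hb']
    funext j
    simp only [mulVec, dotProduct, Finset.sum_apply, Pi.smul_apply, smul_eq_mul,
      Finset.mul_sum]
    rw [Finset.sum_comm]
    exact Finset.sum_congr rfl fun r _ => Finset.sum_congr rfl fun l _ => by ring
  have hdot : ∀ k, Xt k ⬝ᵥ C⁻¹.mulVec b = yhat k := by
    intro k
    rw [hmvs, hyhat]
    simp only [dotProduct, Finset.sum_apply, Pi.smul_apply, smul_eq_mul, Finset.mul_sum]
    rw [Finset.sum_comm]
    refine Finset.sum_congr rfl fun r _ => ?_
    rw [hh, dotProduct, Finset.sum_mul]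
    refine Finset.sum_congr rfl fun j _ => ?_
    ring
  -- closed form for αloo
  have haval : a * (1 - h i i) = yhat i - y i := by
    rw [ha, div_mul_cancel₀]
    intro hz
    apply hne
    linarith [hz]
  have hv : M.mulVec (C⁻¹.mulVec b + a • C⁻¹.mulVec x) = b - y i • x := by
    have hCC : ∀ v : Fin q → ℝ, C.mulVec (C⁻¹.mulVec v) = v := by
      intro v
      rw [mulVec_mulVec, Matrix.mul_nonsing_inv C hCunit, one_mulVec]
    rw [hM, sub_mulVec, mulVec_add, mulVec_smul, hCC, hCC,
      mulVec_add, mulVec_smul, vecMulVec_mulVec', vecMulVec_mulVec']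
    have h1 : x ⬝ᵥ C⁻¹.mulVec b = yhat i := hdot i
    have h2 : x ⬝ᵥ C⁻¹.mulVec x = h i i := (hh i i).symm
    rw [h1, h2]
    funext j
    simp only [Pi.add_apply, Pi.sub_apply, Pi.smul_apply, smul_eq_mul]
    linear_combination x j * haval
  have hαv : αloo = C⁻¹.mulVec b + a • C⁻¹.mulVec x := by
    rw [hαloo, ← hv, mulVec_mulVec, Matrix.nonsing_inv_mul M hC', one_mulVec]
  have key : ∀ k, Xt k ⬝ᵥ αloo = yhat k + a * h k i := by
    intro k
    rw [hαv, dotProduct_add, hdot k, dotProduct_smul, smul_eq_mul, ← hh k i]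
  calc ∑ k ∈ Finset.univ.erase i, (Xt k ⬝ᵥ αloo) ^ 2
      = ∑ k ∈ Finset.univ.erase i,
          (yhat k ^ 2 + 2 * a * (yhat k * h k i) + a ^ 2 * h k i ^ 2) := by
        refine Finset.sum_congr rfl fun k _ => ?_
        rw [key k]; ring
    _ = _ := by
        rw [Finset.sum_add_distrib, Finset.sum_add_distrib, ← Finset.mul_sum, ← Finset.mul_sum]
end
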